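/- arXiv:1310.2416 — 6 statements merged into one kernel-verified Lean document; each statement's English description precedes it below -/
import Mathlib

section
/- Let (b_n)_{n≥1} be a sequence of nonzero elements of a GCD domain R and define a_n = ∏_{d | n} b_d. Then (a_n) is a strong divisibility sequence if and only if for all positive integers m, n with m ∤ n and n ∤ m, gcd(b_m, b_n) = 1. -/
/-!
Writing `g = gcd m n`, the divisors of `m` split into those of `g` and those not dividing `n`,
so `a m = a g * x` and `a n = a g * y` with `x`, `y` the products of `b` over the divisors of `m`
(resp. `n`) not dividing `n` (resp. `m`). Since `a g ≠ 0`, `gcd (a m) (a n) ~ a g` exactly when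
`x` and `y` are coprime, i.e. when `b d` and `b e` are coprime for all such `d`, `e`. Any such
pair is incomparable under divisibility, and an incomparable pair `m`, `n` is itself one.
-/

open Finset

theorem Nat.prod_divisors_eq_prod_divisors_gcd_mul {M : Type*} [CommMonoid M] (f : ℕ → M)
    {m : ℕ} (n : ℕ) (hm : m ≠ 0) :
    ∏ d ∈ m.divisors, f d =
      (∏ d ∈ (m.gcd n).divisors, f d) * ∏ d ∈ m.divisors with ¬d ∣ n, f d := by
  have hdvd : {d ∈ m.divisors | d ∣ n} = (m.gcd n).divisors := by
    ext d
    simp +contextual [Nat.dvd_gcd_iff, hm]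
  rw [← hdvd, prod_filter_mul_prod_filter_not]

theorem associated_gcd_mul_mul_self_iff {α : Type*} [CommMonoidWithZero α] [GCDMonoid α]
    {c : α} (hc : c ≠ 0) (x y : α) :
    Associated (gcd (c * x) (c * y)) c ↔ IsRelPrime x y := by
  rw [← gcd_isUnit_iff_isRelPrime, ← associated_one_iff_isUnit]
  have hc1 : Associated c (c * 1) := .of_eq (mul_one c).symm
  refine ⟨fun h ↦ ?_, fun h ↦ ?_⟩
  · exact ((gcd_mul_left' c x y).symm.trans (h.trans hc1)).of_mul_left .rfl hc
  · exact (gcd_mul_left' c x y).trans ((h.mul_left c).trans hc1.symm)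

theorem forall_isRelPrime_prod_divisors_filter_not_dvd_iff {α : Type*} [CommMonoid α]
    [DecompositionMonoid α] (f : ℕ → α) :
    (∀ m n, 1 ≤ m → 1 ≤ n →
      IsRelPrime (∏ d ∈ m.divisors with ¬d ∣ n, f d) (∏ e ∈ n.divisors with ¬e ∣ m, f e)) ↔
    (∀ m n, 1 ≤ m → 1 ≤ n → ¬m ∣ n → ¬n ∣ m → IsRelPrime (f m) (f n)) := by
  simp_rw [IsRelPrime.prod_left_iff, IsRelPrime.prod_right_iff, mem_filter, Nat.mem_divisors]
  refine ⟨fun h m n hm hn hmn hnm ↦ ?_, fun h m n hm hn d hd e he ↦ ?_⟩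
  · exact h m n hm hn m ⟨⟨dvd_rfl, by omega⟩, hmn⟩ n ⟨⟨dvd_rfl, by omega⟩, hnm⟩
  · obtain ⟨⟨hdm, -⟩, hdn⟩ := hd
    obtain ⟨⟨hen, -⟩, hem⟩ := he
    exact h d e (Nat.pos_of_dvd_of_pos hdm hm) (Nat.pos_of_dvd_of_pos hen hn)
      (fun hde ↦ hdn (hde.trans hen)) (fun hed ↦ hem (hed.trans hdm))

/-- For `a n = ∏_{d ∣ n} b d`, the sequence `(a n)` is a strong divisibility
sequence iff `b m` and `b n` are relatively prime whenever `m ∤ n` and `n ∤ m`. -/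
theorem special_strong_divisibility_iff {R : Type*} [CommRing R] [IsDomain R] [GCDMonoid R]
    (b : ℕ → R) (hb : ∀ n, 1 ≤ n → b n ≠ 0)
    (a : ℕ → R) (hab : ∀ n, 1 ≤ n → a n = ∏ d ∈ n.divisors, b d) :
    (∀ m n, 1 ≤ m → 1 ≤ n → Associated (gcd (a m) (a n)) (a (Nat.gcd m n))) ↔
    (∀ m n, 1 ≤ m → 1 ≤ n → ¬ m ∣ n → ¬ n ∣ m → IsUnit (gcd (b m) (b n))) := by
  have ha_ne : ∀ g, 1 ≤ g → a g ≠ 0 := fun g hg ↦ by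
    rw [hab g hg]
    exact prod_ne_zero_iff.mpr fun d hd ↦ hb d (Nat.pos_of_mem_divisors hd)
  have hsplit : ∀ m n, 1 ≤ m → 1 ≤ n →
      (Associated (gcd (a m) (a n)) (a (m.gcd n)) ↔
        IsRelPrime (∏ d ∈ m.divisors with ¬d ∣ n, b d) (∏ e ∈ n.divisors with ¬e ∣ m, b e)) := by
    intro m n hm hn
    have hg : 1 ≤ m.gcd n := Nat.gcd_pos_of_pos_left n hm
    have hm_split := Nat.prod_divisors_eq_prod_divisors_gcd_mul b n (by omega : m ≠ 0)
    have hn_split := Nat.prod_divisors_eq_prod_divisors_gcd_mul b m (by omega : n ≠ 0)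
    rw [Nat.gcd_comm n m, ← hab _ hg] at hn_split
    rw [← hab _ hg] at hm_split
    rw [hab m hm, hab n hn, hm_split, hn_split]
    exact associated_gcd_mul_mul_self_iff (ha_ne _ hg) _ _
  simp_rw [gcd_isUnit_iff_isRelPrime, ← forall_isRelPrime_prod_divisors_filter_not_dvd_iff]
  exact forall₄_congr hsplit
end

section
/- Let (a_n)_{n≥1} be a sequence of nonzero elements of a GCD domain R, and define its lcm-sequence (c_n) by c_1 = a_1 and c_n = lcm(a_1,...,a_n)/lcm(a_1,...,a_{n-1}) for n ≥ 2. Then (a_n) is a strong divisibility sequence if and only if a_n is associated to ∏_{d | n} c_d for all n ≥ 1. -/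
/-!
Write `L n` for an lcm of `a 1, …, a n`. From `lcm (L (n - 1)) (a n) ~ L (n - 1) * c n` and
`gcd * lcm ~ product` one gets `a n ~ gcd (a n) (L (n - 1)) * c n` for every sequence.

If `a` is a strong divisibility sequence, `gcd` distributes over `lcm`, so `gcd (a n) (L (n - 1))`
is an lcm of the `a d` over the proper divisors `d` of `n`. On a divisor-closed set `S` on which the
product formula already holds, the lcm of `a` over `S` is `∏ d ∈ S, c d`: removing the largest
element `m` of `S`, the new factor `a m` shares with the rest exactly the lcm over the proper
divisors of `m`, so it contributes exactly `c m`. Strong induction on `n` gives the product formula.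

Conversely, the product formula makes `d ∣ e → a d ∣ a e`, and for `m < n` (by induction on `n`)
`gcd (a m) (a n) ∣ gcd (a m) (lcm_{d ∣ n, d < n} a d) ~ lcm_d a (gcd m d) ∣ a (gcd m n)`.
-/

/-- `iterLcm a n` is an lcm of `a 1, a 2, …, a n` (with `iterLcm a 0 = 1`). -/
noncomputable def iterLcm {R : Type*} [CommRing R] [IsDomain R] [GCDMonoid R]
    (a : ℕ → R) : ℕ → R
  | 0 => 1
  | n + 1 => lcm (iterLcm a n) (a (n + 1))

local infixl:50 " ~ᵤ " => Associated

section GCDMonoid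

variable {R : Type*} [CommMonoidWithZero R] [GCDMonoid R] {x y z u p : R}

theorem gcd_lcm_dvd_lcm_gcd (hx : x ≠ 0) : gcd x (lcm y z) ∣ lcm (gcd x y) (gcd x z) := by
  set g := gcd x (lcm y z)
  set e := gcd x (gcd y z)
  -- `g * e ∣ gcd x y * gcd x z ~ lcm (gcd x y) (gcd x z) * e`, then cancel `e`
  have he : e ≠ 0 := fun h => hx ((gcd_eq_zero_iff _ _).1 h).1
  have hgx : g ∣ x := gcd_dvd_left _ _
  have hex : e ∣ x := gcd_dvd_left _ _
  have hey : e ∣ y := (gcd_dvd_right _ _).trans (gcd_dvd_left _ _)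
  have hez : e ∣ z := (gcd_dvd_right _ _).trans (gcd_dvd_right _ _)
  have hprod : Associated (gcd (gcd (x * x) (y * x)) (gcd (x * z) (y * z))) (gcd x y * gcd x z) :=
    ((gcd_mul_right' x x y).gcd (gcd_mul_right' z x y)).trans (gcd_mul_left' (gcd x y) x z)
  have hge : g * e ∣ gcd x y * gcd x z := by
    refine (dvd_gcd (dvd_gcd ?_ ?_) (dvd_gcd ?_ ?_)).trans hprod.dvd
    · exact mul_dvd_mul hgx hex
    · exact mul_comm y x ▸ mul_dvd_mul hgx hey
    · exact mul_dvd_mul hgx hez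
    · exact (mul_dvd_mul (gcd_dvd_right _ _) (dvd_gcd hey hez)).trans
        (mul_comm (gcd y z) (lcm y z) ▸ (gcd_mul_lcm y z).dvd)
  have hgcd : Associated (gcd (gcd x y) (gcd x z)) e :=
    associated_of_dvd_dvd
      (dvd_gcd ((gcd_dvd_left _ _).trans (gcd_dvd_left _ _))
        (gcd_dvd_gcd (gcd_dvd_right _ _) (gcd_dvd_right _ _)))
      (dvd_gcd (dvd_gcd hex hey) (dvd_gcd hex hez))
  have hlcm : gcd x y * gcd x z ∣ lcm (gcd x y) (gcd x z) * e :=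
    (gcd_mul_lcm _ _).symm.dvd.trans (mul_comm e _ ▸ mul_dvd_mul_right hgcd.dvd _)
  exact (mul_dvd_mul_iff_right he).1 (hge.trans hlcm)

theorem gcd_lcm_associated (hx : x ≠ 0) :
    Associated (gcd x (lcm y z)) (lcm (gcd x y) (gcd x z)) :=
  associated_of_dvd_dvd (gcd_lcm_dvd_lcm_gcd hx)
    (lcm_dvd (gcd_dvd_gcd dvd_rfl (dvd_lcm_left _ _)) (gcd_dvd_gcd dvd_rfl (dvd_lcm_right _ _)))

theorem gcd_mul_associated_of_lcm_associated (hx : x ≠ 0) (h : Associated (lcm x y) (x * z)) :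
    Associated (gcd x y * z) y := by
  refine Associated.of_mul_left ?_ (Associated.refl x) hx
  calc x * (gcd x y * z) = gcd x y * (x * z) := mul_left_comm _ _ _
    _ ~ᵤ gcd x y * lcm x y := (Associated.refl _).mul_mul h.symm
    _ ~ᵤ x * y := gcd_mul_lcm x y

theorem lcm_associated_of_gcd_associated (hp : p ≠ 0) (hg : Associated (gcd x y) p)
    (hx : Associated x (u * p)) : Associated (lcm x y) (u * y) := by
  refine Associated.of_mul_right ?_ (Associated.refl p) hp
  calc lcm x y * p ~ᵤ gcd x y * lcm x y := mul_comm p _ ▸ hg.symm.mul_right _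
    _ ~ᵤ x * y := gcd_mul_lcm x y
    _ ~ᵤ u * p * y := hx.mul_right y
    _ = u * y * p := mul_right_comm _ _ _

end GCDMonoid

section LcmOn

variable {R ι κ : Type*} [CommMonoidWithZero R] [GCDMonoid R] {s : Finset ι} {f g : ι → R} {x : R}

/-- An lcm of the values of `f` on `s`; unlike `Finset.lcm` it needs no normalization. -/
noncomputable def lcmOn (s : Finset ι) (f : ι → R) : R :=
  (s.toList.map f).foldr lcm 1

theorem lcmOn_dvd_iff {z : R} : lcmOn s f ∣ z ↔ ∀ i ∈ s, f i ∣ z := by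
  suffices ∀ l : List R, l.foldr lcm 1 ∣ z ↔ ∀ y ∈ l, y ∣ z by simp [lcmOn, this]
  intro l
  induction l with
  | nil => simp
  | cons y l ih => simp [lcm_dvd_iff, ih]

theorem dvd_lcmOn {i : ι} (hi : i ∈ s) : f i ∣ lcmOn s f :=
  lcmOn_dvd_iff.1 dvd_rfl i hi

theorem associated_lcmOn_of_dvd_iff (h : ∀ z, x ∣ z ↔ ∀ i ∈ s, f i ∣ z) :
    Associated x (lcmOn s f) :=
  associated_of_dvd_dvd ((h _).2 fun _ => dvd_lcmOn) (lcmOn_dvd_iff.2 ((h x).1 dvd_rfl))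

@[simp]
theorem lcmOn_empty : lcmOn (∅ : Finset ι) f = 1 := by
  simp [lcmOn]

theorem lcmOn_insert [DecidableEq ι] {i : ι} :
    Associated (lcmOn (insert i s) f) (lcm (f i) (lcmOn s f)) :=
  (associated_lcmOn_of_dvd_iff fun _ => by simp [lcm_dvd_iff, lcmOn_dvd_iff]).symm

theorem lcmOn_congr (h : ∀ i ∈ s, Associated (f i) (g i)) : Associated (lcmOn s f) (lcmOn s g) :=
  associated_lcmOn_of_dvd_iff fun _ => lcmOn_dvd_iff.trans <|
    forall₂_congr fun i hi => (h i hi).dvd_iff_dvd_left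

theorem lcmOn_image [DecidableEq ι] (s : Finset κ) (e : κ → ι) :
    Associated (lcmOn (s.image e) f) (lcmOn s (f ∘ e)) :=
  associated_lcmOn_of_dvd_iff fun _ => by simp [lcmOn_dvd_iff]

theorem gcd_lcmOn (hx : x ≠ 0) : Associated (gcd x (lcmOn s f)) (lcmOn s fun i => gcd x (f i)) := by
  classical
  induction s using Finset.induction_on with
  | empty => simp
  | insert i s _ ih =>
    calc gcd x (lcmOn (insert i s) f)
        ~ᵤ gcd x (lcm (f i) (lcmOn s f)) := Associated.rfl.gcd lcmOn_insert
      _ ~ᵤ lcm (gcd x (f i)) (gcd x (lcmOn s f)) := gcd_lcm_associated hx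
      _ ~ᵤ lcm (gcd x (f i)) (lcmOn s fun i => gcd x (f i)) := Associated.rfl.lcm ih
      _ ~ᵤ lcmOn (insert i s) fun i => gcd x (f i) :=
        (lcmOn_insert (f := fun i => gcd x (f i))).symm

end LcmOn

theorem Nat.prod_divisors_eq_mul_prod_properDivisors {M : Type*} [CommMonoid M] (f : ℕ → M)
    {n : ℕ} (hn : n ≠ 0) : ∏ d ∈ n.divisors, f d = f n * ∏ d ∈ n.properDivisors, f d := by
  rw [← Nat.insert_self_properDivisors hn, Finset.prod_insert Nat.self_notMem_properDivisors]

theorem Nat.image_gcd_eq_properDivisors {n : ℕ} {T : Finset ℕ} (hT : n.properDivisors ⊆ T)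
    (hTn : T ⊆ Finset.Ico 1 n) : T.image n.gcd = n.properDivisors := by
  ext d
  simp only [Finset.mem_image]
  constructor
  · rintro ⟨k, hk, rfl⟩
    have hk' := Finset.mem_Ico.1 (hTn hk)
    exact Nat.mem_properDivisors.2
      ⟨Nat.gcd_dvd_left n k, (Nat.gcd_le_right (n := k) n (by omega)).trans_lt hk'.2⟩
  · intro hd
    exact ⟨d, hT hd, Nat.gcd_eq_right (Nat.mem_properDivisors.1 hd).1⟩

theorem Nat.divisors_subset_properDivisors_of_mem {n d : ℕ} (hd : d ∈ n.properDivisors) :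
    d.divisors ⊆ n.properDivisors :=
  have ⟨hdn, hlt⟩ := Nat.mem_properDivisors.1 hd
  Nat.divisors_subset_properDivisors (by omega) hdn hlt.ne

theorem Nat.properDivisors_subset_Ico (n : ℕ) : n.properDivisors ⊆ Finset.Ico 1 n := fun _ hd =>
  Finset.mem_Ico.2 ⟨Nat.pos_of_mem_properDivisors hd, (Nat.mem_properDivisors.1 hd).2⟩

section StrongDivisibility

open Finset

variable {R : Type*} [CommMonoidWithZero R] [GCDMonoid R] {a c : ℕ → R}

def StrongDivisibilityOn (a : ℕ → R) (S : Finset ℕ) : Prop :=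
  ∀ m ∈ S, ∀ n ∈ S, Associated (gcd (a m) (a n)) (a (m.gcd n))

theorem StrongDivisibilityOn.mono {S T : Finset ℕ} (h : StrongDivisibilityOn a T) (hST : S ⊆ T) :
    StrongDivisibilityOn a S :=
  fun m hm n hn => h m (hST hm) n (hST hn)

theorem gcd_lcmOn_associated_lcmOn_properDivisors {n : ℕ} {T : Finset ℕ} (ha : a n ≠ 0)
    (hT : n.properDivisors ⊆ T) (hTn : T ⊆ Ico 1 n)
    (h : ∀ k ∈ T, Associated (gcd (a n) (a k)) (a (n.gcd k))) :
    Associated (gcd (a n) (lcmOn T a)) (lcmOn n.properDivisors a) :=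
  (gcd_lcmOn ha).trans <| (lcmOn_congr h).trans <|
    Nat.image_gcd_eq_properDivisors hT hTn ▸ (lcmOn_image T n.gcd).symm

theorem lcmOn_associated_prod_of_divisors_subset (S : Finset ℕ) (hS0 : 0 ∉ S)
    (hS : ∀ d ∈ S, d.divisors ⊆ S) (ha : ∀ d ∈ S, a d ≠ 0) (hsd : StrongDivisibilityOn a S)
    (hprod : ∀ d ∈ S, Associated (a d) (∏ e ∈ d.divisors, c e)) :
    Associated (lcmOn S a) (∏ d ∈ S, c d) := by
  induction S using Finset.strongInduction with
  | H S ih =>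
  rcases S.eq_empty_or_nonempty with rfl | hne
  · simp
  set m := S.max' hne
  have hmS : m ∈ S := S.max'_mem hne
  have hm0 : m ≠ 0 := fun h => hS0 (h ▸ hmS)
  have hlt : S.erase m ⊆ Ico 1 m := fun k hk => mem_Ico.2
    ⟨Nat.pos_of_ne_zero fun h => hS0 (h ▸ mem_of_mem_erase hk), S.lt_max'_of_mem_erase_max' hne hk⟩
  have hpd : m.properDivisors ⊆ S.erase m := fun d hd =>
    mem_erase.2
      ⟨(Nat.mem_properDivisors.1 hd).2.ne, hS m hmS (Nat.properDivisors_subset_divisors hd)⟩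
  have hS' : Associated (lcmOn (S.erase m) a) (∏ d ∈ S.erase m, c d) := by
    refine ih _ (erase_ssubset hmS) (fun h => hS0 (mem_of_mem_erase h)) (fun d hd e he => ?_)
      (fun d hd => ha d (mem_of_mem_erase hd)) (hsd.mono (erase_subset m S))
      (fun d hd => hprod d (mem_of_mem_erase hd))
    have hed : e ≤ d := Nat.divisor_le he
    exact mem_erase.2 ⟨by have := (mem_Ico.1 (hlt hd)).2; omega, hS d (mem_of_mem_erase hd) he⟩
  have hpd_lcm : Associated (lcmOn m.properDivisors a) (∏ d ∈ m.properDivisors, c d) := by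
    have hsub : m.properDivisors ⊆ S := hpd.trans (erase_subset m S)
    exact ih _ (hpd.trans_ssubset (erase_ssubset hmS)) (by simp)
      (fun _ => Nat.divisors_subset_properDivisors_of_mem) (fun d hd => ha d (hsub hd))
      (hsd.mono hsub) (fun d hd => hprod d (hsub hd))
  have hgcd : Associated (gcd (a m) (lcmOn (S.erase m) a)) (∏ d ∈ m.properDivisors, c d) :=
    (gcd_lcmOn_associated_lcmOn_properDivisors (ha m hmS) hpd hlt
      fun k hk => hsd m hmS k (mem_of_mem_erase hk)).trans hpd_lcm
  have ham : Associated (a m) (c m * ∏ d ∈ m.properDivisors, c d) :=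
    Nat.prod_divisors_eq_mul_prod_properDivisors c hm0 ▸ hprod m hmS
  calc lcmOn S a ~ᵤ lcm (a m) (lcmOn (S.erase m) a) := by
        conv_lhs => rw [← insert_erase hmS]
        exact lcmOn_insert
    _ ~ᵤ c m * lcmOn (S.erase m) a :=
      lcm_associated_of_gcd_associated
        (right_ne_zero_of_mul (ham.ne_zero_iff.1 (ha m hmS))) hgcd ham
    _ ~ᵤ c m * ∏ d ∈ S.erase m, c d := hS'.mul_left _
    _ = ∏ d ∈ S, c d := mul_prod_erase S c hmS

theorem lcmOn_properDivisors_associated_prod {n : ℕ} (ha : ∀ n, 1 ≤ n → a n ≠ 0)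
    (hsd : StrongDivisibilityOn a (Ico 1 n))
    (hprod : ∀ d ∈ n.properDivisors, Associated (a d) (∏ e ∈ d.divisors, c e)) :
    Associated (lcmOn n.properDivisors a) (∏ d ∈ n.properDivisors, c d) :=
  lcmOn_associated_prod_of_divisors_subset _ (by simp)
    (fun _ => Nat.divisors_subset_properDivisors_of_mem)
    (fun _ hd => ha _ (Nat.pos_of_mem_properDivisors hd))
    (hsd.mono (Nat.properDivisors_subset_Ico n)) hprod

end StrongDivisibility

section IterLcm

open Finset

variable {R : Type*} [CommRing R] [IsDomain R] [GCDMonoid R] {a c : ℕ → R}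

theorem iterLcm_dvd_iff {n : ℕ} {z : R} : iterLcm a n ∣ z ↔ ∀ i, 1 ≤ i → i ≤ n → a i ∣ z := by
  induction n with
  | zero => simp only [iterLcm, one_dvd, true_iff]; omega
  | succ n ih =>
    simp only [iterLcm, _root_.lcm_dvd_iff, ih]
    refine ⟨fun ⟨h, hn⟩ i hi hin => ?_,
      fun h => ⟨fun i hi hin => h i hi (by omega), h _ (by omega) le_rfl⟩⟩
    rcases Nat.le_add_one_iff.1 hin with hin | rfl
    · exact h i hi hin
    · exact hn

theorem iterLcm_sub_one_associated_lcmOn_Ico (a : ℕ → R) (n : ℕ) :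
    Associated (iterLcm a (n - 1)) (lcmOn (Ico 1 n) a) :=
  associated_lcmOn_of_dvd_iff fun _ => iterLcm_dvd_iff.trans <| by
    simp only [mem_Ico]
    exact ⟨fun h i hi => h i hi.1 (by omega), fun h i hi hin => h i ⟨hi, by omega⟩⟩

theorem iterLcm_ne_zero (ha : ∀ n, 1 ≤ n → a n ≠ 0) (n : ℕ) : iterLcm a n ≠ 0 := by
  induction n with
  | zero => exact one_ne_zero
  | succ n ih => exact lcm_ne_zero_iff.2 ⟨ih, ha (n + 1) (by omega)⟩

theorem gcd_lcmOn_Ico_mul_associated (ha : ∀ n, 1 ≤ n → a n ≠ 0)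
    (hc : ∀ n, 1 ≤ n → Associated (iterLcm a n) (iterLcm a (n - 1) * c n)) {n : ℕ} (hn : 1 ≤ n) :
    Associated (gcd (a n) (lcmOn (Ico 1 n) a) * c n) (a n) := by
  obtain ⟨k, rfl⟩ : ∃ k, n = k + 1 := ⟨n - 1, by omega⟩
  have hL := iterLcm_sub_one_associated_lcmOn_Ico a (k + 1)
  rw [Nat.add_sub_cancel] at hL
  refine Associated.trans (((gcd_comm' _ _).trans (hL.symm.gcd .rfl)).mul_right _) ?_
  exact gcd_mul_associated_of_lcm_associated (iterLcm_ne_zero ha k) (hc (k + 1) (by omega))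

theorem associated_prod_divisors_of_strongDivisibility (ha : ∀ n, 1 ≤ n → a n ≠ 0)
    (hc : ∀ n, 1 ≤ n → Associated (iterLcm a n) (iterLcm a (n - 1) * c n))
    (hsd : ∀ m n, 1 ≤ m → 1 ≤ n → Associated (gcd (a m) (a n)) (a (Nat.gcd m n)))
    (n : ℕ) (hn : 1 ≤ n) : Associated (a n) (∏ d ∈ n.divisors, c d) := by
  induction n using Nat.strong_induction_on with
  | _ n ih =>
  have hsdn : StrongDivisibilityOn a (Ico 1 (n + 1)) := fun k hk l hl =>
    hsd k l (mem_Ico.1 hk).1 (mem_Ico.1 hl).1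
  have hpd := lcmOn_properDivisors_associated_prod ha (hsdn.mono (Ico_subset_Ico_right n.le_succ))
    fun d hd => ih d (Nat.mem_properDivisors.1 hd).2 (Nat.pos_of_mem_properDivisors hd)
  calc a n ~ᵤ gcd (a n) (lcmOn (Ico 1 n) a) * c n := (gcd_lcmOn_Ico_mul_associated ha hc hn).symm
    _ ~ᵤ lcmOn n.properDivisors a * c n :=
      (gcd_lcmOn_associated_lcmOn_properDivisors (ha n hn) (Nat.properDivisors_subset_Ico n)
        subset_rfl fun k hk => hsd n k hn (mem_Ico.1 hk).1).mul_right _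
    _ ~ᵤ (∏ d ∈ n.properDivisors, c d) * c n := hpd.mul_right _
    _ = ∏ d ∈ n.divisors, c d := by
      rw [Nat.prod_divisors_eq_mul_prod_properDivisors c (by omega), mul_comm]

theorem gcd_associated_of_mem_Ico (ha : ∀ n, 1 ≤ n → a n ≠ 0)
    (hc : ∀ n, 1 ≤ n → Associated (iterLcm a n) (iterLcm a (n - 1) * c n))
    (hprod : ∀ n, 1 ≤ n → Associated (a n) (∏ d ∈ n.divisors, c d))
    {m n : ℕ} (hn : 1 ≤ n) (hsd : StrongDivisibilityOn a (Ico 1 n)) (hm : m ∈ Ico 1 n) :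
    Associated (gcd (a m) (a n)) (a (m.gcd n)) := by
  have hm1 : 1 ≤ m := (mem_Ico.1 hm).1
  have hmono {d e : ℕ} (he : e ≠ 0) (hde : d ∣ e) : a d ∣ a e :=
    ((hprod d (Nat.pos_of_dvd_of_pos hde (by omega))).dvd.trans
      (prod_dvd_prod_of_subset _ _ c (Nat.divisors_subset_of_dvd he hde))).trans
      (hprod e (by omega)).symm.dvd
  have hpd := lcmOn_properDivisors_associated_prod ha hsd
    fun d hd => hprod d (Nat.pos_of_mem_properDivisors hd)
  have han : Associated (a n) (lcmOn n.properDivisors a * c n) := by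
    have h := hprod n hn
    rw [Nat.prod_divisors_eq_mul_prod_properDivisors c (by omega), mul_comm] at h
    exact h.trans (hpd.symm.mul_right _)
  -- both sides times `c n` are associated to `a n`
  have hgcd : Associated (gcd (a n) (lcmOn (Ico 1 n) a)) (lcmOn n.properDivisors a) :=
    ((gcd_lcmOn_Ico_mul_associated ha hc hn).trans han).of_mul_right .rfl
      (right_ne_zero_of_mul (han.ne_zero_iff.1 (ha n hn)))
  have hle : gcd (a m) (a n) ∣ gcd (a m) (lcmOn n.properDivisors a) :=
    dvd_gcd (gcd_dvd_left _ _)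
      ((dvd_gcd (gcd_dvd_right _ _) ((gcd_dvd_left _ _).trans (dvd_lcmOn hm))).trans hgcd.dvd)
  have hge : gcd (a m) (lcmOn n.properDivisors a) ∣ a (m.gcd n) := by
    refine (gcd_lcmOn (ha m hm1)).dvd.trans (lcmOn_dvd_iff.2 fun d hd => ?_)
    refine (hsd m hm d (Nat.properDivisors_subset_Ico n hd)).dvd.trans (hmono ?_ ?_)
    · exact (Nat.gcd_pos_of_pos_right m (by omega)).ne'
    · exact Nat.gcd_dvd_gcd_of_dvd_right m (Nat.mem_properDivisors.1 hd).1
  exact associated_of_dvd_dvd (hle.trans hge)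
    (dvd_gcd (hmono (by omega) (Nat.gcd_dvd_left m n)) (hmono (by omega) (Nat.gcd_dvd_right m n)))

theorem strongDivisibilityOn_Ico_of_associated_prod (ha : ∀ n, 1 ≤ n → a n ≠ 0)
    (hc : ∀ n, 1 ≤ n → Associated (iterLcm a n) (iterLcm a (n - 1) * c n))
    (hprod : ∀ n, 1 ≤ n → Associated (a n) (∏ d ∈ n.divisors, c d)) (n : ℕ) :
    StrongDivisibilityOn a (Ico 1 n) := by
  induction n with
  | zero => simp [StrongDivisibilityOn]
  | succ n ih =>
  rcases Nat.eq_zero_or_pos n with rfl | hn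
  · simp [StrongDivisibilityOn]
  have hlt {m} := gcd_associated_of_mem_Ico (m := m) ha hc hprod hn ih
  rw [← insert_Ico_right_eq_Ico_add_one hn]
  intro k hk l hl
  rcases mem_insert.1 hk with rfl | hk <;> rcases mem_insert.1 hl with rfl | hl
  · simpa using (associated_gcd_left_iff.2 dvd_rfl).symm
  · exact (gcd_comm' _ _).trans (Nat.gcd_comm l k ▸ hlt hl)
  · exact hlt hk
  · exact ih k hk l hl

end IterLcm

/-- Main theorem: if `(c n)` is the lcm-sequence of `(a n)`, i.e. `c 1 = a 1` and
`c n = lcm(a 1,…,a n) / lcm(a 1,…,a (n-1))` for `n ≥ 2` (expressed multiplicatively,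
up to units), then `(a n)` is a strong divisibility sequence iff
`a n` is associated to `∏_{d ∣ n} c d` for all `n ≥ 1`. -/
theorem strong_divisibility_iff_lcm_sequence_product
    {R : Type*} [CommRing R] [IsDomain R] [GCDMonoid R]
    (a : ℕ → R) (ha : ∀ n, 1 ≤ n → a n ≠ 0)
    (c : ℕ → R)
    (hc : ∀ n, 1 ≤ n → Associated (iterLcm a n) (iterLcm a (n - 1) * c n)) :
    (∀ m n, 1 ≤ m → 1 ≤ n → Associated (gcd (a m) (a n)) (a (Nat.gcd m n))) ↔
    (∀ n, 1 ≤ n → Associated (a n) (∏ d ∈ n.divisors, c d)) := by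
  refine ⟨associated_prod_divisors_of_strongDivisibility ha hc, fun hprod m n hm hn => ?_⟩
  exact strongDivisibilityOn_Ico_of_associated_prod ha hc hprod (max m n + 1)
    m (Finset.mem_Ico.2 ⟨hm, by omega⟩) n (Finset.mem_Ico.2 ⟨hn, by omega⟩)
end

section
/- If (a_n) is a strong divisibility sequence in a GCD domain and (b_n) is the unique sequence with a_n = ∏_{d|n} b_d, then for every n ≥ 1, lcm(a_1, a_2, ..., a_n) is associated to b_1 · b_2 · ... · b_n. -/
def Finset.IsDivisorClosed (S : Finset ℕ) : Prop :=
  ∀ n ∈ S, ∀ d, d ∣ n → d ∈ S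

theorem Finset.IsDivisorClosed.pos {S : Finset ℕ} (hS : S.IsDivisorClosed) {n : ℕ} (hn : n ∈ S) :
    0 < n := by
  obtain ⟨N, hN⟩ := S.exists_nat_subset_range
  refine Nat.pos_of_ne_zero fun h0 => Finset.notMem_range_self (hN ?_)
  exact hS n hn N (h0 ▸ dvd_zero N)

theorem Finset.IsDivisorClosed.erase {S : Finset ℕ} (hS : S.IsDivisorClosed) {m : ℕ}
    (hle : ∀ n ∈ S, n ≤ m) : (S.erase m).IsDivisorClosed := fun n hn d hd =>
  have hnS := Finset.mem_of_mem_erase hn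
  Finset.mem_erase.mpr ⟨((Nat.le_of_dvd (hS.pos hnS) hd).trans_lt
    ((hle n hnS).lt_of_ne (Finset.ne_of_mem_erase hn))).ne, hS n hnS d hd⟩

theorem Nat.isDivisorClosed_properDivisors (m : ℕ) : m.properDivisors.IsDivisorClosed :=
  fun n hn d hd => by
    obtain ⟨hnm, hlt⟩ := Nat.mem_properDivisors.mp hn
    exact Nat.divisors_subset_properDivisors (by omega) hnm hlt.ne
      (Nat.mem_divisors.mpr ⟨hd, (Nat.pos_of_mem_properDivisors hn).ne'⟩)

section GCDLCM

variable {α : Type*} [CommMonoidWithZero α]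

/- The right side is associated to `gcd (a * gcd a c) (b * gcd a c)`, the gcd of `a * a`, `a * c`,
`b * a` and `b * c`, each of which the left side divides. -/
theorem gcd_lcm_mul_gcd_gcd_dvd_mul_gcd [GCDMonoid α] (a b c : α) :
    gcd a (lcm b c) * gcd a (gcd b c) ∣ gcd a b * gcd a c := by
  have ha : gcd a (lcm b c) * gcd a (gcd b c) ∣ a * gcd a c :=
    mul_dvd_mul (gcd_dvd_left _ _) (gcd_dvd_gcd dvd_rfl (gcd_dvd_right _ _))
  have hb : gcd a (lcm b c) * gcd a (gcd b c) ∣ b * gcd a c := by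
    refine (gcd_mul_left' b a c).dvd_iff_dvd_right.mp (dvd_gcd ?_ ?_)
    · rw [mul_comm b]
      exact mul_dvd_mul (gcd_dvd_left _ _) ((gcd_dvd_right _ _).trans (gcd_dvd_left _ _))
    · calc gcd a (lcm b c) * gcd a (gcd b c) ∣ lcm b c * gcd b c :=
            mul_dvd_mul (gcd_dvd_right _ _) (gcd_dvd_right _ _)
        _ ∣ b * c := by rw [mul_comm]; exact (gcd_mul_lcm b c).dvd
  exact (gcd_mul_right' (gcd a c) a b).dvd_iff_dvd_right.mp (dvd_gcd ha hb)

theorem gcd_lcm_dvd_lcm_gcd_s11 [GCDMonoid α] (a b c : α) :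
    gcd a (lcm b c) ∣ lcm (gcd a b) (gcd a c) := by
  rcases eq_or_ne a 0 with rfl | ha
  · exact (gcd_dvd_right _ _).trans
      (lcm_dvd_lcm (dvd_gcd (dvd_zero b) dvd_rfl) (dvd_gcd (dvd_zero c) dvd_rfl))
  have hg : gcd (gcd a b) (gcd a c) ∣ gcd a (gcd b c) :=
    dvd_gcd ((gcd_dvd_left _ _).trans (gcd_dvd_left _ _))
      (dvd_gcd ((gcd_dvd_left _ _).trans (gcd_dvd_right _ _))
        ((gcd_dvd_right _ _).trans (gcd_dvd_right _ _)))
  have h0 : gcd a (gcd b c) ≠ 0 := fun h => ha ((gcd_eq_zero_iff _ _).mp h).1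
  rw [← mul_dvd_mul_iff_right h0]
  calc gcd a (lcm b c) * gcd a (gcd b c) ∣ gcd a b * gcd a c :=
        gcd_lcm_mul_gcd_gcd_dvd_mul_gcd a b c
    _ ∣ gcd (gcd a b) (gcd a c) * lcm (gcd a b) (gcd a c) := (gcd_mul_lcm _ _).symm.dvd
    _ ∣ lcm (gcd a b) (gcd a c) * gcd a (gcd b c) := by
        rw [mul_comm]
        exact mul_dvd_mul_left _ hg

variable [NormalizedGCDMonoid α]

theorem gcd_lcm_distrib (a b c : α) : gcd a (lcm b c) = lcm (gcd a b) (gcd a c) :=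
  dvd_antisymm_of_normalize_eq (normalize_gcd _ _) (normalize_lcm _ _) (gcd_lcm_dvd_lcm_gcd_s11 a b c)
    (lcm_dvd (gcd_dvd_gcd dvd_rfl (dvd_lcm_left b c)) (gcd_dvd_gcd dvd_rfl (dvd_lcm_right b c)))

theorem gcd_finset_lcm_distrib {ι : Type*} (z : α) (s : Finset ι) (f : ι → α) :
    gcd z (s.lcm f) = s.lcm fun i => gcd z (f i) := by
  classical
  induction s using Finset.induction_on with
  | empty => simp
  | insert i s _ ih => rw [Finset.lcm_insert, Finset.lcm_insert, gcd_lcm_distrib, ih]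

theorem gcd_apply_finset_lcm_eq_lcm_properDivisors
    {A : ℕ → α} (hsd : ∀ m n, 0 < m → 0 < n → gcd (A m) (A n) = A (m.gcd n)) {m : ℕ} (hm : 0 < m)
    {S : Finset ℕ} (hS : ∀ n ∈ S, 0 < n ∧ n < m) (hmS : m.properDivisors ⊆ S) :
    gcd (A m) (S.lcm A) = m.properDivisors.lcm A := by
  have himage : S.image m.gcd = m.properDivisors := by
    ext e
    simp only [Finset.mem_image, Nat.mem_properDivisors]
    constructor
    · rintro ⟨n, hn, rfl⟩
      exact ⟨Nat.gcd_dvd_left m n, (Nat.gcd_le_right (m := m) (hS n hn).1).trans_lt (hS n hn).2⟩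
    · intro he
      exact ⟨e, hmS (Nat.mem_properDivisors.mpr he), Nat.gcd_eq_right he.1⟩
  rw [gcd_finset_lcm_distrib, ← himage, Finset.lcm_image]
  exact Finset.lcm_congr rfl fun n hn => hsd m n hm (hS n hn).1

variable [Subsingleton αˣ]

theorem lcm_eq_mul_of_eq_mul_gcd {x y z : α} (hx : x ≠ 0) (h : x = y * gcd x z) :
    lcm x z = y * z := by
  have hg : gcd x z ≠ 0 := fun h0 => hx ((gcd_eq_zero_iff x z).mp h0).1
  apply mul_left_cancel₀ hg
  calc gcd x z * lcm x z = x * z := associated_iff_eq.mp (gcd_mul_lcm x z)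
    _ = y * gcd x z * z := by rw [← h]
    _ = gcd x z * (y * z) := by rw [mul_comm y, mul_assoc]

variable {A B : ℕ → α}

theorem finset_lcm_eq_prod_of_isDivisorClosed (hA : ∀ n, 0 < n → A n ≠ 0)
    (hsd : ∀ m n, 0 < m → 0 < n → gcd (A m) (A n) = A (m.gcd n))
    (hAB : ∀ n, 0 < n → A n = ∏ d ∈ n.divisors, B d)
    {S : Finset ℕ} (hS : S.IsDivisorClosed) : S.lcm A = ∏ d ∈ S, B d := by
  obtain ⟨N, hN⟩ := S.exists_nat_subset_range
  induction N generalizing S with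
  | zero => simp [Finset.subset_empty.mp hN]
  | succ m ih =>
    have hle : ∀ n ∈ S, n ≤ m := fun n hn => Finset.mem_range_succ_iff.mp (hN hn)
    by_cases hmS : m ∈ S
    swap
    · exact ih hS fun n hn =>
        Finset.mem_range.mpr ((hle n hn).lt_of_ne (ne_of_mem_of_not_mem hn hmS))
    have hm : 0 < m := hS.pos hmS
    have hlt : ∀ n ∈ S.erase m, n < m := fun n hn =>
      (hle n (Finset.mem_of_mem_erase hn)).lt_of_ne (Finset.ne_of_mem_erase hn)
    have hT : m.properDivisors ⊆ S.erase m := fun d hd =>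
      Finset.mem_erase.mpr ⟨(Nat.mem_properDivisors.mp hd).2.ne,
        hS m hmS d (Nat.mem_properDivisors.mp hd).1⟩
    have hAm : A m = B m * gcd (A m) ((S.erase m).lcm A) := by
      rw [gcd_apply_finset_lcm_eq_lcm_properDivisors hsd hm
          (fun n hn => ⟨hS.pos (Finset.mem_of_mem_erase hn), hlt n hn⟩) hT,
        ih (Nat.isDivisorClosed_properDivisors m)
          (fun d hd => Finset.mem_range.mpr (Nat.mem_properDivisors.mp hd).2),
        hAB m hm, ← Nat.insert_self_properDivisors hm.ne',
        Finset.prod_insert Nat.self_notMem_properDivisors]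
    calc S.lcm A = lcm (A m) ((S.erase m).lcm A) := by
          conv_lhs => rw [← Finset.insert_erase hmS]
          exact Finset.lcm_insert
      _ = B m * ∏ d ∈ S.erase m, B d := by
          rw [lcm_eq_mul_of_eq_mul_gcd (hA m hm) hAm,
            ih (hS.erase hle) fun n hn => Finset.mem_range.mpr (hlt n hn)]
      _ = ∏ d ∈ S, B d := Finset.mul_prod_erase S B hmS

end GCDLCM

noncomputable instance Associates.instNormalizedGCDMonoid {α : Type*} [CommMonoidWithZero α]
    [GCDMonoid α] : NormalizedGCDMonoid (Associates α) where
  normalize_gcd _ _ := normalize_eq _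
  normalize_lcm _ _ := normalize_eq _

theorem Associates.mk_iterLcm {R : Type*} [CommRing R] [IsDomain R] [GCDMonoid R] (a : ℕ → R)
    (n : ℕ) : Associates.mk (iterLcm a n) = (Finset.Icc 1 n).lcm fun i => Associates.mk (a i) := by
  induction n with
  | zero => simp [iterLcm]
  | succ n ih =>
    rw [iterLcm, ← Associates.lcm_mk_mk, ih, ← Finset.insert_Icc_right_eq_Icc_add_one (by omega),
      Finset.lcm_insert, lcm_comm]

theorem lcm_associated_prod_general
    {R : Type*} [CommRing R] [IsDomain R] [GCDMonoid R]
    (a : ℕ → R) (ha : ∀ n, 1 ≤ n → a n ≠ 0)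
    (hsd : ∀ m n, 1 ≤ m → 1 ≤ n → Associated (gcd (a m) (a n)) (a (Nat.gcd m n)))
    (b : ℕ → R)
    (hab : ∀ n, 1 ≤ n → a n = ∏ d ∈ n.divisors, b d) :
    ∀ n, 1 ≤ n → Associated (iterLcm a n) (∏ i ∈ Finset.Icc 1 n, b i) := by
  intro n _
  have hIcc : (Finset.Icc 1 n).IsDivisorClosed := by
    intro k hk d hd
    rw [Finset.mem_Icc] at hk ⊢
    exact ⟨Nat.pos_of_dvd_of_pos hd hk.1, (Nat.le_of_dvd hk.1 hd).trans hk.2⟩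
  rw [← Associates.mk_eq_mk_iff_associated, Associates.mk_iterLcm, ← Associates.finsetProd_mk]
  refine finset_lcm_eq_prod_of_isDivisorClosed (fun k hk => Associates.mk_ne_zero.mpr (ha k hk))
    (fun k l hk hl => Associates.mk_eq_mk_iff_associated.mpr (hsd k l hk hl))
    (fun k hk => ?_) hIcc
  rw [hab k hk, Associates.finsetProd_mk]

/-- If `(a n)` is a strong divisibility sequence and `a n = ∏_{d ∣ n} b d`, then
`lcm(a 1, …, a n)` is associated to `b 1 * b 2 * ⋯ * b n`. -/
theorem lcm_associated_prod
    {R : Type*} [CommRing R] [IsDomain R] [GCDMonoid R]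
    (a : ℕ → R) (ha : ∀ n, 1 ≤ n → a n ≠ 0)
    (hsd : ∀ m n, 1 ≤ m → 1 ≤ n → Associated (gcd (a m) (a n)) (a (Nat.gcd m n)))
    (b : ℕ → R) (hb : ∀ n, 1 ≤ n → b n ≠ 0)
    (hab : ∀ n, 1 ≤ n → a n = ∏ d ∈ n.divisors, b d) :
    ∀ n, 1 ≤ n → Associated (iterLcm a n) (∏ i ∈ Finset.Icc 1 n, b i) :=
  lcm_associated_prod_general a ha hsd b hab
end

section
/- For every n ≥ 2, the n-th cyclotomic polynomial satisfies Φ_n(x) = lcm(x−1, x²−1, ..., xⁿ−1) / lcm(x−1, x²−1, ..., x^{n−1}−1) in ℤ[x] (up to sign). -/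
/-!
Every `Φ_d` with `d ≤ n` divides some `X^i - 1` with `i ≤ n`, and conversely each such
`X^i - 1` is a product of distinct `Φ_d` with `d ≤ n`. Since the `Φ_d` are pairwise
non-associated primes of `ℤ[X]`, the lcm of `X - 1, …, X^n - 1` is `Φ_1 ⋯ Φ_n` up to sign,
and dividing out the same product for `n - 1` leaves `Φ_n`.
-/

open Polynomial

theorem associated_lcm_mul_left_of_dvd_of_isRelPrime {α : Type*} [CommMonoidWithZero α]
    [GCDMonoid α] {p a b : α} (hab : a ∣ b) (hpb : IsRelPrime p b) :
    Associated (lcm (p * a) b) (p * b) :=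
  associated_of_dvd_dvd (lcm_dvd (mul_dvd_mul_left p hab) (dvd_mul_left b p))
    (hpb.mul_dvd ((dvd_mul_right p a).trans (dvd_lcm_left _ _)) (dvd_lcm_right _ _))

theorem cyclotomic.isRelPrime_int {m n : ℕ} (hm : 0 < m) (hmn : m ≠ n) :
    IsRelPrime (cyclotomic m ℤ) (cyclotomic n ℤ) := by
  rcases n.eq_zero_or_pos with rfl | hn
  · rw [cyclotomic_zero]
    exact isRelPrime_one_right
  rw [(cyclotomic.irreducible hm).isRelPrime_iff_not_dvd]
  intro h
  have hassoc := (cyclotomic.irreducible hm).associated_of_dvd (cyclotomic.irreducible hn) h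
  exact hmn (cyclotomic_injective
    (eq_of_monic_of_associated (cyclotomic.monic m ℤ) (cyclotomic.monic n ℤ) hassoc))

theorem prod_cyclotomic_Icc_succ (R : Type*) [CommRing R] (n : ℕ) :
    ∏ d ∈ Finset.Icc 1 (n + 1), cyclotomic d R =
      cyclotomic (n + 1) R * ∏ d ∈ Finset.Icc 1 n, cyclotomic d R := by
  rw [← Finset.insert_Icc_right_eq_Icc_add_one (by omega), Finset.prod_insert (by simp)]

theorem X_pow_sub_one_eq_cyclotomic_mul_prod_properDivisors {R : Type*} [CommRing R] {n : ℕ}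
    (hn : 0 < n) :
    (X : R[X]) ^ n - 1 = cyclotomic n R * ∏ d ∈ n.properDivisors, cyclotomic d R := by
  rw [← prod_cyclotomic_eq_X_pow_sub_one hn, ← Nat.insert_self_properDivisors hn.ne',
    Finset.prod_insert Nat.self_notMem_properDivisors]

theorem prod_cyclotomic_properDivisors_dvd_prod_Icc (n : ℕ) :
    ∏ d ∈ (n + 1).properDivisors, cyclotomic d ℤ ∣ ∏ d ∈ Finset.Icc 1 n, cyclotomic d ℤ := by
  refine Finset.prod_dvd_prod_of_subset _ _ _ fun d hd => ?_
  obtain ⟨hdvd, hlt⟩ := Nat.mem_properDivisors.mp hd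
  exact Finset.mem_Icc.mpr ⟨Nat.pos_of_dvd_of_pos hdvd n.succ_pos, Nat.lt_succ_iff.mp hlt⟩

theorem lcm_X_pow_sub_one_associated_prod_cyclotomic (n : ℕ) :
    Associated ((Finset.Icc 1 n).lcm (fun i => (X : ℤ[X]) ^ i - 1))
      (∏ d ∈ Finset.Icc 1 n, cyclotomic d ℤ) := by
  induction n with
  | zero => simp
  | succ n ih =>
    have hcoprime : IsRelPrime (cyclotomic (n + 1) ℤ) (∏ d ∈ Finset.Icc 1 n, cyclotomic d ℤ) :=
      IsRelPrime.prod_right fun d hd =>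
        cyclotomic.isRelPrime_int n.succ_pos (by have := Finset.mem_Icc.mp hd; omega)
    rw [← Finset.insert_Icc_right_eq_Icc_add_one (by omega), Finset.lcm_insert,
      Finset.insert_Icc_right_eq_Icc_add_one (by omega), prod_cyclotomic_Icc_succ,
      X_pow_sub_one_eq_cyclotomic_mul_prod_properDivisors (n := n + 1) (by omega)]
    exact ((Associated.refl _).lcm ih).trans (associated_lcm_mul_left_of_dvd_of_isRelPrime
      (prod_cyclotomic_properDivisors_dvd_prod_Icc n) hcoprime)

theorem cyclotomic_eq_lcm_quotient_general (n : ℕ) :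
    Associated ((Finset.Icc 1 n).lcm (fun i => (X : ℤ[X]) ^ i - 1))
      (((Finset.Icc 1 (n - 1)).lcm (fun i => (X : ℤ[X]) ^ i - 1)) *
        cyclotomic n ℤ) := by
  refine (lcm_X_pow_sub_one_associated_prod_cyclotomic n).trans ?_
  rcases n with _ | n
  · simp
  rw [prod_cyclotomic_Icc_succ, Nat.add_sub_cancel, mul_comm]
  exact (lcm_X_pow_sub_one_associated_prod_cyclotomic n).symm.mul_right _

/-- For `n ≥ 2`, the `n`-th cyclotomic polynomial is, up to sign,
`lcm(x-1, x²-1, …, xⁿ-1) / lcm(x-1, x²-1, …, x^{n-1}-1)` in `ℤ[x]`. -/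
theorem cyclotomic_eq_lcm_quotient (n : ℕ) (hn : 2 ≤ n) :
    Associated ((Finset.Icc 1 n).lcm (fun i => (X : ℤ[X]) ^ i - 1))
      (((Finset.Icc 1 (n - 1)).lcm (fun i => (X : ℤ[X]) ^ i - 1)) *
        cyclotomic n ℤ) :=
  cyclotomic_eq_lcm_quotient_general n
end

section
/- For every integer b ≥ 2 and every n ≥ 2, Φ_n(b) = lcm(b−1, b²−1, ..., bⁿ−1) / lcm(b−1, b²−1, ..., b^{n−1}−1), where Φ_n is the n-th cyclotomic polynomial. -/
/-!
Since `b ^ i - 1 = ∏_{d ∣ i} Φ_d(b)`, the lcm of `b ^ i - 1` over `i ≤ n` is `∏_{j ≤ n} Φ_j(b)`.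
Going from `n - 1` to `n`, the new term `b ^ n - 1` is `Φ_n(b)` times factors `Φ_d(b)`, `d ∣ n`,
already present, and `Φ_n(b)` is coprime to the remaining `Φ_j(b)` with `j < n`, `j ∤ n`: a prime
`p` dividing `Φ_j(b)` forces `j = p ^ k * ord_p(b)`, so two such indices divide one another.
-/

open Polynomial Finset

theorem eq_prime_pow_mul_orderOf_of_dvd_cyclotomic_eval {p : ℕ} [Fact p.Prime] {b : ℤ} {n : ℕ}
    (hn : n ≠ 0) (h : (p : ℤ) ∣ (cyclotomic n ℤ).eval b) :
    n = p ^ n.factorization p * orderOf (b : ZMod p) := by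
  set m := n / p ^ n.factorization p
  have hnm : n = p ^ n.factorization p * m := (Nat.ordProj_mul_ordCompl_eq_self n p).symm
  have : NeZero (m : ZMod p) :=
    ⟨(ZMod.natCast_eq_zero_iff _ _).not.mpr (Nat.not_dvd_ordCompl Fact.out hn)⟩
  have hroot : (cyclotomic n (ZMod p)).IsRoot (b : ZMod p) := by
    rw [IsRoot.def, ← map_cyclotomic_int, eval_intCast_map, eq_intCast,
      ZMod.intCast_zmod_eq_zero_iff_dvd]
    exact h
  rw [hnm] at hroot
  rwa [← (isRoot_cyclotomic_prime_pow_mul_iff_of_charP.mp hroot).eq_orderOf]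

theorem dvd_or_dvd_of_prime_dvd_cyclotomic_eval {p : ℕ} (hp : p.Prime) {b : ℤ} {m n : ℕ}
    (hm : m ≠ 0) (hn : n ≠ 0) (hpm : (p : ℤ) ∣ (cyclotomic m ℤ).eval b)
    (hpn : (p : ℤ) ∣ (cyclotomic n ℤ).eval b) : m ∣ n ∨ n ∣ m := by
  have := Fact.mk hp
  rw [eq_prime_pow_mul_orderOf_of_dvd_cyclotomic_eval hm hpm,
    eq_prime_pow_mul_orderOf_of_dvd_cyclotomic_eval hn hpn]
  rcases le_total (m.factorization p) (n.factorization p) with h | h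
  · exact .inl (mul_dvd_mul_right (pow_dvd_pow p h) _)
  · exact .inr (mul_dvd_mul_right (pow_dvd_pow p h) _)

theorem isCoprime_cyclotomic_eval_of_not_dvd (b : ℤ) {m n : ℕ} (hmn : ¬m ∣ n) (hnm : ¬n ∣ m) :
    IsCoprime ((cyclotomic m ℤ).eval b) ((cyclotomic n ℤ).eval b) := by
  have hm : m ≠ 0 := by rintro rfl; exact hnm (dvd_zero n)
  have hn : n ≠ 0 := by rintro rfl; exact hmn (dvd_zero m)
  have key : ∀ p : ℕ, p.Prime → (p : ℤ) ∣ (cyclotomic m ℤ).eval b →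
      ¬(p : ℤ) ∣ (cyclotomic n ℤ).eval b := fun p hp hpm hpn =>
    (dvd_or_dvd_of_prime_dvd_cyclotomic_eval hp hm hn hpm hpn).elim hmn hnm
  refine isCoprime_of_prime_dvd ?_ fun z hz hzm hzn => ?_
  · -- if both values vanished, every prime would divide both
    rintro ⟨hm0, hn0⟩
    exact key 2 Nat.prime_two (by simp [hm0]) (by simp [hn0])
  · exact key z.natAbs (Int.prime_iff_natAbs_prime.mp hz) (Int.natAbs_dvd.mpr hzm)
      (Int.natAbs_dvd.mpr hzn)

theorem pow_sub_one_eq_cyclotomic_eval_mul_prod_properDivisors (b : ℤ) {n : ℕ} (hn : n ≠ 0) :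
    b ^ n - 1 = (cyclotomic n ℤ).eval b * ∏ d ∈ n.properDivisors, (cyclotomic d ℤ).eval b := by
  calc b ^ n - 1 = (X ^ n - 1 : ℤ[X]).eval b := by simp
    _ = (∏ d ∈ n.divisors, cyclotomic d ℤ).eval b := by
      rw [prod_cyclotomic_eq_X_pow_sub_one (Nat.pos_of_ne_zero hn)]
    _ = _ := by rw [← Nat.cons_self_properDivisors hn, prod_cons, eval_mul, eval_prod]

theorem lcm_mul_mul_of_isCoprime {a q r : ℤ} (ha : 0 ≤ a) (hq : 0 ≤ q) (hr : 0 ≤ r)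
    (h : IsCoprime a r) : lcm (a * q) (q * r) = a * (q * r) := by
  have hlcm : lcm a r = a * r :=
    Int.dvd_antisymm (Int.lcm_nonneg a r) (mul_nonneg ha hr) (lcm_dvd (dvd_mul_right a r)
      (dvd_mul_left r a)) (h.mul_dvd (dvd_lcm_left a r) (dvd_lcm_right a r))
  rw [mul_comm a q, lcm_mul_left, hlcm, Int.normalize_of_nonneg hq]
  ring

theorem prod_Icc_cyclotomic_eval_eq_mul (b : ℤ) (n : ℕ) :
    ∏ j ∈ Icc 1 n, (cyclotomic j ℤ).eval b =
      (∏ d ∈ (n + 1).properDivisors, (cyclotomic d ℤ).eval b) *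
        ∏ j ∈ Icc 1 n with ¬j ∣ n + 1, (cyclotomic j ℤ).eval b := by
  have hdiv : {j ∈ Icc 1 n | j ∣ n + 1} = (n + 1).properDivisors := by
    ext j
    simp only [mem_filter, mem_Icc, Nat.mem_properDivisors]
    constructor
    · rintro ⟨⟨-, hjn⟩, hj⟩
      exact ⟨hj, by omega⟩
    · rintro ⟨hj, hjn⟩
      exact ⟨⟨Nat.pos_of_dvd_of_pos hj n.succ_pos, by omega⟩, hj⟩
  rw [← hdiv, prod_filter_mul_prod_filter_not]

theorem lcm_pow_sub_one_eq_prod_cyclotomic_eval {b : ℤ} (hb : 1 < b) (n : ℕ) :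
    (Icc 1 n).lcm (fun i => b ^ i - 1) = ∏ j ∈ Icc 1 n, (cyclotomic j ℤ).eval b := by
  induction n with
  | zero => simp
  | succ n ih =>
    have hpos : ∀ j, 0 ≤ (cyclotomic j ℤ).eval b := fun j => (cyclotomic_pos' j hb).le
    have hcop : IsCoprime ((cyclotomic (n + 1) ℤ).eval b)
        (∏ j ∈ Icc 1 n with ¬j ∣ n + 1, (cyclotomic j ℤ).eval b) := by
      refine IsCoprime.prod_right fun j hj => ?_
      simp only [mem_filter, mem_Icc] at hj
      exact isCoprime_cyclotomic_eval_of_not_dvd b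
        (fun h => by have := Nat.le_of_dvd (by omega) h; omega) hj.2
    rw [← insert_Icc_right_eq_Icc_add_one (by omega), lcm_insert, prod_insert (by simp), ih,
      pow_sub_one_eq_cyclotomic_eval_mul_prod_properDivisors b n.add_one_ne_zero,
      prod_Icc_cyclotomic_eval_eq_mul, lcm_mul_mul_of_isCoprime (hpos _)
        (prod_nonneg fun _ _ => hpos _) (prod_nonneg fun _ _ => hpos _) hcop]

theorem cyclotomic_eval_eq_lcm_quotient_general (b : ℤ) (hb : 2 ≤ b) (n : ℕ) :
    (cyclotomic n ℤ).eval b =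
      ((Finset.Icc 1 n).lcm (fun i => b ^ i - 1)) /
        ((Finset.Icc 1 (n - 1)).lcm (fun i => b ^ i - 1)) ∧
    ((Finset.Icc 1 (n - 1)).lcm (fun i => b ^ i - 1)) ∣
      ((Finset.Icc 1 n).lcm (fun i => b ^ i - 1)) := by
  have hb₁ : 1 < b := by omega
  obtain _ | n := n
  · simp
  have hprod : ∏ j ∈ Icc 1 (n + 1), (cyclotomic j ℤ).eval b =
      (cyclotomic (n + 1) ℤ).eval b * ∏ j ∈ Icc 1 n, (cyclotomic j ℤ).eval b := by
    rw [← insert_Icc_right_eq_Icc_add_one (by omega), prod_insert (by simp)]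
  have hpos : 0 < ∏ j ∈ Icc 1 n, (cyclotomic j ℤ).eval b :=
    prod_pos fun j _ => cyclotomic_pos' j hb₁
  simp only [add_tsub_cancel_right, lcm_pow_sub_one_eq_prod_cyclotomic_eval hb₁, hprod]
  exact ⟨(Int.mul_ediv_cancel _ hpos.ne').symm, dvd_mul_left _ _⟩

/-- For integers `b ≥ 2` and `n ≥ 2`,
`Φ_n(b) = lcm(b-1, b²-1, …, bⁿ-1) / lcm(b-1, b²-1, …, b^{n-1}-1)`. -/
theorem cyclotomic_eval_eq_lcm_quotient (b : ℤ) (hb : 2 ≤ b) (n : ℕ) (hn : 2 ≤ n) :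
    (cyclotomic n ℤ).eval b =
      ((Finset.Icc 1 n).lcm (fun i => b ^ i - 1)) /
        ((Finset.Icc 1 (n - 1)).lcm (fun i => b ^ i - 1)) ∧
    ((Finset.Icc 1 (n - 1)).lcm (fun i => b ^ i - 1)) ∣
      ((Finset.Icc 1 n).lcm (fun i => b ^ i - 1)) :=
  cyclotomic_eval_eq_lcm_quotient_general b hb n
end

section
/- The Fibonacci polynomials defined by F_1(x) = 1, F_2(x) = x, F_{n+2}(x) = x·F_{n+1}(x) + F_n(x) form a strong divisibility sequence in ℤ[x]: gcd(F_m(x), F_n(x)) is associated to F_{gcd(m,n)}(x) for all m, n ≥ 1. -/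
/-!
The argument works for every sequence with `U 0 = 0`, `U 1 = 1` and
`U (n + 2) = p U (n + 1) + q U n`, `q` a unit; `fibPoly` is the case `p = X`, `q = 1`.
Such a sequence satisfies the addition formula `U (m + n + 1) = U (m + 1) U (n + 1) + q U m U n`,
and consecutive terms are coprime. So a common divisor of `U (m + 1)` and `U (m + n + 1)` is
coprime to `U m` and therefore divides `U n`: the pairs `(U m, U n)` and `(U m, U (n % m))` have
the same common divisors, and the Euclidean algorithm on the indices carries `gcd (U m) (U n)`
to `U (gcd m n)`.
-/

open Polynomial

/-- The Fibonacci polynomials: `F₁ = 1`, `F₂ = x`, `F_{n+2} = x F_{n+1} + F_n`. -/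
noncomputable def fibPoly : ℕ → ℤ[X]
  | 0 => 0
  | 1 => 1
  | n + 2 => X * fibPoly (n + 1) + fibPoly n

/-- The Lucas sequence `U(p, -q)`, in the usual notation `U(P, Q)` with
`U (n + 2) = P U (n + 1) - Q U n`. -/
def lucasU {R : Type*} [CommRing R] (p q : R) : ℕ → R
  | 0 => 0
  | 1 => 1
  | n + 2 => p * lucasU p q (n + 1) + q * lucasU p q n

section LucasSequence

variable {R : Type*} [CommRing R] {p q : R}

@[simp]
theorem lucasU_zero : lucasU p q 0 = 0 := rfl

@[simp]
theorem lucasU_one : lucasU p q 1 = 1 := rfl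

theorem lucasU_add_two (n : ℕ) :
    lucasU p q (n + 2) = p * lucasU p q (n + 1) + q * lucasU p q n := rfl

theorem lucasU_add_add_one (m : ℕ) : ∀ n : ℕ, lucasU p q (m + n + 1) =
    lucasU p q (m + 1) * lucasU p q (n + 1) + q * lucasU p q m * lucasU p q n
  | 0 => by simp
  | 1 => by simp [lucasU_add_two]; ring
  | n + 2 => by
    rw [show m + (n + 2) + 1 = m + n + 1 + 2 by omega, lucasU_add_two,
      show m + n + 1 + 1 = m + (n + 1) + 1 by omega, lucasU_add_add_one m n,
      lucasU_add_add_one m (n + 1)]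
    simp only [lucasU_add_two]
    ring

theorem isRelPrime_lucasU_succ (hq : IsUnit q) :
    ∀ n : ℕ, IsRelPrime (lucasU p q n) (lucasU p q (n + 1))
  | 0 => by simpa using isRelPrime_one_right
  | n + 1 => fun d hd hd' => by
    rw [lucasU_add_two, dvd_add_right (dvd_mul_of_dvd_right hd p), hq.dvd_mul_left] at hd'
    exact isRelPrime_lucasU_succ hq n hd' hd

variable [DecompositionMonoid R]

theorem dvd_lucasU_add_add_one_iff (hq : IsUnit q) {d : R} {m : ℕ}
    (hd : d ∣ lucasU p q (m + 1)) (n : ℕ) :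
    d ∣ lucasU p q (m + n + 1) ↔ d ∣ lucasU p q n := by
  have hcop : IsRelPrime d (lucasU p q m) := (isRelPrime_lucasU_succ hq m).symm.of_dvd_left hd
  rw [lucasU_add_add_one, dvd_add_right (dvd_mul_of_dvd_left hd _), mul_assoc, hq.dvd_mul_left]
  exact ⟨hcop.dvd_of_dvd_mul_left, (dvd_mul_of_dvd_right · _)⟩

theorem dvd_lucasU_add_mul_iff (hq : IsUnit q) {d : R} {m : ℕ} (hd : d ∣ lucasU p q m)
    (n : ℕ) : ∀ k : ℕ, d ∣ lucasU p q (n + k * m) ↔ d ∣ lucasU p q n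
  | 0 => by simp
  | k + 1 => by
    obtain _ | m := m
    · simp
    rw [show n + (k + 1) * (m + 1) = m + (n + k * (m + 1)) + 1 by ring,
      dvd_lucasU_add_add_one_iff hq hd, dvd_lucasU_add_mul_iff hq hd n k]

theorem dvd_lucasU_gcd_iff (hq : IsUnit q) (d : R) (m n : ℕ) :
    d ∣ lucasU p q (Nat.gcd m n) ↔ d ∣ lucasU p q m ∧ d ∣ lucasU p q n := by
  induction m, n using Nat.gcd.induction with
  | H0 n => simp
  | H1 m n _ ih =>
    rw [Nat.gcd_rec, ih, and_comm, and_congr_right_iff]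
    intro hd
    rw [← dvd_lucasU_add_mul_iff hq hd (n % m) (n / m), mul_comm, Nat.mod_add_div]

end LucasSequence

theorem associated_gcd_lucasU {R : Type*} [CommRing R] [IsDomain R] [GCDMonoid R] {p q : R}
    (hq : IsUnit q) (m n : ℕ) :
    Associated (gcd (lucasU p q m) (lucasU p q n)) (lucasU p q (Nat.gcd m n)) :=
  associated_of_dvd_dvd
    ((dvd_lucasU_gcd_iff hq _ m n).2 ⟨gcd_dvd_left _ _, gcd_dvd_right _ _⟩)
    ((dvd_gcd_iff _ _ _).2 <| (dvd_lucasU_gcd_iff hq _ m n).1 dvd_rfl)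

theorem fibPoly_eq_lucasU : ∀ n : ℕ, fibPoly n = lucasU X 1 n
  | 0 => rfl
  | 1 => rfl
  | n + 2 => by
    rw [fibPoly, lucasU_add_two, fibPoly_eq_lucasU n, fibPoly_eq_lucasU (n + 1), one_mul]

theorem fibPoly_strong_divisibility_general (m n : ℕ) :
    Associated (gcd (fibPoly m) (fibPoly n)) (fibPoly (Nat.gcd m n)) := by
  simpa only [fibPoly_eq_lucasU] using associated_gcd_lucasU isUnit_one m n

/-- The Fibonacci polynomials form a strong divisibility sequence in `ℤ[x]`. -/
theorem fibPoly_strong_divisibility (m n : ℕ) (hm : 1 ≤ m) (hn : 1 ≤ n) :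
    Associated (gcd (fibPoly m) (fibPoly n)) (fibPoly (Nat.gcd m n)) :=
  fibPoly_strong_divisibility_general m n
end
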